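/- Let G be a countable group acting by measure-preserving transformations on a standard probability space (X, 𝒳, μ). If 𝒜 and ℬ are two G-invariant complete sub-σ-algebras with Rokhlin entropy zero, then their join 𝒜 ∨ ℬ also has Rokhlin entropy zero. -/

import Mathlib

open MeasureTheory Filter
open scoped ENNReal

/-- A measure-preserving action of a group `G` on a measure space `(X, μ)`. -/
structure MeasAction (G : Type*) [Group G] (X : Type*) (mX : MeasurableSpace X)
    (μ : Measure X) where
  T : G → X → X
  map_one : ∀ x, T 1 x = x
  map_mul : ∀ g h x, T g (T h x) = T (g * h) x
  measurePreserving : ∀ g, MeasurePreserving (T g) μ μ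

/-- A countable (ℕ-indexed) partition: pairwise disjoint sets covering the space. -/
def IsCountablePartition {X : Type*} (A : ℕ → Set X) : Prop :=
  Pairwise (Function.onFun Disjoint A) ∧ (⋃ n, A n) = Set.univ

/-- Shannon entropy of a countable family of sets, with the convention 0 log 0 = 0. -/
noncomputable def partitionEntropy {X : Type*} {mX : MeasurableSpace X} (μ : Measure X)
    {ι : Type*} (A : ι → Set X) : ℝ≥0∞ :=
  ∑' i, ENNReal.ofReal (Real.negMulLog (μ (A i)).toReal)

/-- `m` is a `G`-invariant, `μ`-complete sub-σ-algebra of the ambient σ-algebra. -/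
def IsInvCompleteSub {X : Type*} {G : Type*} [Group G] {mX : MeasurableSpace X}
    (μ : Measure X) (a : MeasAction G X mX μ) (m : MeasurableSpace X) : Prop :=
  m ≤ mX ∧
  (∀ (g : G) (s : Set X), MeasurableSet[m] s → MeasurableSet[m] (a.T g ⁻¹' s)) ∧
  (∀ s t : Set X, MeasurableSet[m] s → MeasurableSet[mX] t → μ (symmDiff s t) = 0 →
    MeasurableSet[m] t)

/-- The smallest invariant complete sub-σ-algebra making all atoms of `A` measurable. -/
def genAlg {X : Type*} {G : Type*} [Group G] {mX : MeasurableSpace X} (μ : Measure X)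
    (a : MeasAction G X mX μ) (A : ℕ → Set X) : MeasurableSpace X :=
  sInf {m | IsInvCompleteSub μ a m ∧ ∀ n, MeasurableSet[m] (A n)}

/-- The partition `A` generates the sub-σ-algebra `m`: `A` is `m`-measurable and `m` is the
smallest invariant complete sub-σ-algebra making `A` measurable. -/
def Generates {X : Type*} {G : Type*} [Group G] {mX : MeasurableSpace X} (μ : Measure X)
    (a : MeasAction G X mX μ) (A : ℕ → Set X) (m : MeasurableSpace X) : Prop :=
  (∀ n, MeasurableSet[m] (A n)) ∧ genAlg μ a A = m

/-- Rokhlin entropy of an invariant complete sub-σ-algebra: the infimum of Shannon entropies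
of countable partitions measurable with respect to `m` and generating `m`. -/
noncomputable def rokhlinEntropy {X : Type*} {G : Type*} [Group G] {mX : MeasurableSpace X}
    (μ : Measure X) (a : MeasAction G X mX μ) (m : MeasurableSpace X) : ℝ≥0∞ :=
  ⨅ (A : ℕ → Set X) (_ : IsCountablePartition A ∧ Generates μ a A m),
    partitionEntropy μ A

/-- The partition `A` is generating for the system: the invariant complete σ-algebra it
generates is the full σ-algebra, up to null sets. -/
def IsGeneratingPartition {X : Type*} {G : Type*} [Group G] {mX : MeasurableSpace X}
    (μ : Measure X) (a : MeasAction G X mX μ) (A : ℕ → Set X) : Prop :=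
  ∀ s : Set X, MeasurableSet s →
    ∃ t : Set X, MeasurableSet[genAlg μ a A] t ∧ μ (symmDiff s t) = 0

/-- Rokhlin entropy of a dynamical system: infimum of Shannon entropies of countable
generating partitions. -/
noncomputable def sysRokhlinEntropy {X : Type*} {G : Type*} [Group G] {mX : MeasurableSpace X}
    (μ : Measure X) (a : MeasAction G X mX μ) : ℝ≥0∞ :=
  ⨅ (A : ℕ → Set X) (_ : IsCountablePartition A ∧ (∀ n, MeasurableSet (A n)) ∧
      IsGeneratingPartition μ a A),
    partitionEntropy μ A

/-- Ergodicity of a measure-preserving action: every a.e.-invariant set is null or conull. -/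
def IsErgodicAction {X : Type*} {G : Type*} [Group G] {mX : MeasurableSpace X}
    (μ : Measure X) (a : MeasAction G X mX μ) : Prop :=
  ∀ s : Set X, MeasurableSet s → (∀ g : G, μ (symmDiff s (a.T g ⁻¹' s)) = 0) →
    μ s = 0 ∨ μ s = 1

/-!
If `α` generates `𝒜` and `β` generates `ℬ`, the common refinement `α ∨ β` generates `𝒜 ∨ ℬ`: its
atoms are measurable for the join, and the atoms of `α` and of `β` are countable unions of its atoms.
Shannon entropy is subadditive, `H(α ∨ β) ≤ H(α) + H(β)`, by Gibbs' inequality `log x ≤ x - 1` at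
`x = μ(A) μ(B) / μ(A ∩ B)`. Hence Rokhlin entropy is subadditive under joins.
-/

open Real

theorem Real.negMulLog_add_le_mul_neg_log_add {p r s : ℝ} (hp : 0 ≤ p) (hpr : p ≤ r)
    (hps : p ≤ s) : negMulLog p + p ≤ p * -log r + p * -log s + r * s := by
  rcases hp.eq_or_lt with rfl | hp
  · simpa using mul_nonneg hpr hps
  have hr : 0 < r := hp.trans_le hpr
  have hs : 0 < s := hp.trans_le hps
  have key : log (r * s / p) ≤ r * s / p - 1 := log_le_sub_one_of_pos (by positivity)
  rw [log_div (by positivity) hp.ne', log_mul hr.ne' hs.ne'] at key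
  have hmul := mul_le_mul_of_nonneg_left key hp.le
  rw [show p * (r * s / p - 1) = r * s - p by field_simp] at hmul
  rw [negMulLog]
  linarith

namespace ENNReal

theorem ofReal_negMulLog_eq_mul {p : ℝ≥0∞} (hp : p ≠ ∞) :
    ENNReal.ofReal (negMulLog p.toReal) = p * ENNReal.ofReal (-Real.log p.toReal) := by
  rw [negMulLog, neg_mul, ← mul_neg, ENNReal.ofReal_mul toReal_nonneg, ofReal_toReal hp]

theorem ofReal_negMulLog_add_le {p r s : ℝ≥0∞} (hpr : p ≤ r) (hps : p ≤ s) (hr : r ≤ 1)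
    (hs : s ≤ 1) :
    ENNReal.ofReal (negMulLog p.toReal) + p ≤
      p * ENNReal.ofReal (-Real.log r.toReal) + p * ENNReal.ofReal (-Real.log s.toReal) + r * s := by
  have hr' : r ≠ ∞ := ne_top_of_le_ne_top one_ne_top hr
  have hs' : s ≠ ∞ := ne_top_of_le_ne_top one_ne_top hs
  have hp' : p ≠ ∞ := ne_top_of_le_ne_top hr' hpr
  have neg_log_nonneg {q : ℝ≥0∞} (hq : q ≤ 1) : 0 ≤ -Real.log q.toReal :=
    neg_nonneg.2 (Real.log_nonpos toReal_nonneg (toReal_le_of_le_ofReal zero_le_one (by simpa)))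
  have hr₁ := mul_nonneg (toReal_nonneg (a := p)) (neg_log_nonneg hr)
  have hs₁ := mul_nonneg (toReal_nonneg (a := p)) (neg_log_nonneg hs)
  calc ENNReal.ofReal (negMulLog p.toReal) + p
      = ENNReal.ofReal (negMulLog p.toReal + p.toReal) := by
        rw [ENNReal.ofReal_add (negMulLog_nonneg toReal_nonneg
          (toReal_le_of_le_ofReal zero_le_one (by simpa using hpr.trans hr))) toReal_nonneg,
          ofReal_toReal hp']
    _ ≤ ENNReal.ofReal (p.toReal * -Real.log r.toReal + p.toReal * -Real.log s.toReal +
          r.toReal * s.toReal) :=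
        ENNReal.ofReal_le_ofReal <| negMulLog_add_le_mul_neg_log_add toReal_nonneg
          (toReal_mono hr' hpr) (toReal_mono hs' hps)
    _ = _ := by
        rw [ENNReal.ofReal_add (add_nonneg hr₁ hs₁) (mul_nonneg toReal_nonneg toReal_nonneg),
          ENNReal.ofReal_add hr₁ hs₁, ENNReal.ofReal_mul toReal_nonneg,
          ENNReal.ofReal_mul toReal_nonneg, ENNReal.ofReal_mul toReal_nonneg, ofReal_toReal hp',
          ofReal_toReal hr', ofReal_toReal hs']

end ENNReal

section

variable {X : Type*}

def partitionJoin (A B : ℕ → Set X) : ℕ → Set X :=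
  fun n => A (Nat.unpair n).1 ∩ B (Nat.unpair n).2

@[simp]
theorem partitionJoin_pair (A B : ℕ → Set X) (i j : ℕ) :
    partitionJoin A B (Nat.pair i j) = A i ∩ B j := by
  simp [partitionJoin]

namespace IsCountablePartition

variable {A B : ℕ → Set X}

theorem join (hA : IsCountablePartition A) (hB : IsCountablePartition B) :
    IsCountablePartition (partitionJoin A B) := by
  refine ⟨fun m n hmn => ?_, ?_⟩
  · have hne : Nat.unpair m ≠ Nat.unpair n := fun h => hmn (Nat.pairEquiv.symm.injective h)
    by_cases h₁ : (Nat.unpair m).1 = (Nat.unpair n).1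
    · have h₂ : (Nat.unpair m).2 ≠ (Nat.unpair n).2 := fun h => hne (Prod.ext h₁ h)
      exact (hB.1 h₂).mono Set.inter_subset_right Set.inter_subset_right
    · exact (hA.1 h₁).mono Set.inter_subset_left Set.inter_subset_left
  · refine Set.eq_univ_of_forall fun x => ?_
    obtain ⟨i, hi⟩ := Set.mem_iUnion.1 (hA.2 ▸ Set.mem_univ x)
    obtain ⟨j, hj⟩ := Set.mem_iUnion.1 (hB.2 ▸ Set.mem_univ x)
    exact Set.mem_iUnion.2 ⟨Nat.pair i j, by simpa using ⟨hi, hj⟩⟩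

theorem iUnion_partitionJoin_pair_left (hB : IsCountablePartition B) (i : ℕ) :
    ⋃ j, partitionJoin A B (Nat.pair i j) = A i := by
  simp [← Set.inter_iUnion, hB.2]

theorem iUnion_partitionJoin_pair_right (hA : IsCountablePartition A) (j : ℕ) :
    ⋃ i, partitionJoin A B (Nat.pair i j) = B j := by
  simp [← Set.iUnion_inter, hA.2]

variable {mX : MeasurableSpace X} {μ : Measure X}

theorem tsum_measure_inter (hB : IsCountablePartition B) (hBm : ∀ j, MeasurableSet (B j))
    {s : Set X} (hs : MeasurableSet s) : ∑' j, μ (s ∩ B j) = μ s := by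
  rw [← measure_iUnion (fun j k hjk => (hB.1 hjk).mono Set.inter_subset_right
    Set.inter_subset_right) fun j => hs.inter (hBm j), ← Set.inter_iUnion, hB.2, Set.inter_univ]

theorem tsum_measure (hB : IsCountablePartition B) (hBm : ∀ j, MeasurableSet (B j)) :
    ∑' j, μ (B j) = μ Set.univ := by
  simpa using hB.tsum_measure_inter (μ := μ) hBm MeasurableSet.univ

end IsCountablePartition

section Entropy

variable {mX : MeasurableSpace X} (μ : Measure X)

theorem partitionEntropy_comp_equiv {ι κ : Type*} (e : ι ≃ κ) (A : κ → Set X) :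
    partitionEntropy μ (A ∘ e) = partitionEntropy μ A :=
  e.tsum_eq fun k => ENNReal.ofReal (negMulLog (μ (A k)).toReal)

theorem partitionEntropy_partitionJoin (A B : ℕ → Set X) :
    partitionEntropy μ (partitionJoin A B) =
      partitionEntropy μ fun x : ℕ × ℕ => A x.1 ∩ B x.2 :=
  partitionEntropy_comp_equiv μ Nat.pairEquiv.symm fun x : ℕ × ℕ => A x.1 ∩ B x.2

theorem partitionEntropy_eq_tsum_mul [IsFiniteMeasure μ] {ι : Type*} (A : ι → Set X) :
    partitionEntropy μ A = ∑' i, μ (A i) * ENNReal.ofReal (-log (μ (A i)).toReal) :=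
  tsum_congr fun _ => ENNReal.ofReal_negMulLog_eq_mul (measure_ne_top μ _)

theorem partitionEntropy_inter_le [IsProbabilityMeasure μ] {A B : ℕ → Set X}
    (hA : IsCountablePartition A) (hB : IsCountablePartition B)
    (hAm : ∀ i, MeasurableSet (A i)) (hBm : ∀ j, MeasurableSet (B j)) :
    partitionEntropy μ (fun x : ℕ × ℕ => A x.1 ∩ B x.2) ≤
      partitionEntropy μ A + partitionEntropy μ B := by
  set L : Set X → ℝ≥0∞ := fun s => ENNReal.ofReal (-log (μ s).toReal)
  have row (i : ℕ) : ∑' j, μ (A i ∩ B j) = μ (A i) := hB.tsum_measure_inter hBm (hAm i)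
  have col (j : ℕ) : ∑' i, μ (A i ∩ B j) = μ (B j) := by
    simpa only [Set.inter_comm] using hA.tsum_measure_inter hAm (hBm j)
  have total : ∑' x : ℕ × ℕ, μ (A x.1 ∩ B x.2) = 1 := by
    rw [ENNReal.tsum_prod', tsum_congr row, hA.tsum_measure hAm, measure_univ]
  have first : ∑' x : ℕ × ℕ, μ (A x.1 ∩ B x.2) * L (A x.1) = partitionEntropy μ A := by
    simp only [ENNReal.tsum_prod', ENNReal.tsum_mul_right, row, partitionEntropy_eq_tsum_mul, L]
  have second : ∑' x : ℕ × ℕ, μ (A x.1 ∩ B x.2) * L (B x.2) = partitionEntropy μ B := by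
    simp only [ENNReal.tsum_prod', ENNReal.tsum_comm (α := ℕ), ENNReal.tsum_mul_right, col,
      partitionEntropy_eq_tsum_mul, L]
  have product : ∑' x : ℕ × ℕ, μ (A x.1) * μ (B x.2) = 1 := by
    simp only [ENNReal.tsum_prod', ENNReal.tsum_mul_left,
      hA.tsum_measure hAm, hB.tsum_measure hBm, measure_univ, mul_one]
  refine (ENNReal.add_le_add_iff_right (a := 1) ENNReal.one_ne_top).1 ?_
  calc partitionEntropy μ (fun x : ℕ × ℕ => A x.1 ∩ B x.2) + 1
      = ∑' x : ℕ × ℕ, (ENNReal.ofReal (negMulLog (μ (A x.1 ∩ B x.2)).toReal) +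
          μ (A x.1 ∩ B x.2)) := by
        rw [ENNReal.tsum_add, total, partitionEntropy]
    _ ≤ ∑' x : ℕ × ℕ, (μ (A x.1 ∩ B x.2) * L (A x.1) + μ (A x.1 ∩ B x.2) * L (B x.2) +
          μ (A x.1) * μ (B x.2)) :=
        ENNReal.tsum_le_tsum fun x => ENNReal.ofReal_negMulLog_add_le
          (measure_mono Set.inter_subset_left) (measure_mono Set.inter_subset_right)
          prob_le_one prob_le_one
    _ = partitionEntropy μ A + partitionEntropy μ B + 1 := by
        rw [ENNReal.tsum_add, ENNReal.tsum_add, first, second, product]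

end Entropy

section InvariantSubalgebras

variable {G : Type*} [Group G] {mX : MeasurableSpace X} (μ : Measure X)
  (a : MeasAction G X mX μ)

theorem isInvCompleteSub_self : IsInvCompleteSub μ a mX :=
  ⟨le_rfl, fun g _ hs => (a.measurePreserving g).measurable hs, fun _ _ _ ht _ => ht⟩

variable {μ a}

theorem IsInvCompleteSub.sInf {S : Set (MeasurableSpace X)} (hne : S.Nonempty)
    (hS : ∀ m ∈ S, IsInvCompleteSub μ a m) : IsInvCompleteSub μ a (sInf S) := by
  obtain ⟨m₀, hm₀⟩ := hne
  refine ⟨(sInf_le hm₀).trans (hS m₀ hm₀).1, fun g s hs => ?_, fun s t hs ht hst => ?_⟩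
  · rw [MeasurableSpace.measurableSet_sInf] at hs ⊢
    exact fun m hm => (hS m hm).2.1 g s (hs m hm)
  · rw [MeasurableSpace.measurableSet_sInf] at hs ⊢
    exact fun m hm => (hS m hm).2.2 s t (hs m hm) ht hst

theorem isInvCompleteSub_genAlg {A : ℕ → Set X} (hA : ∀ n, MeasurableSet (A n)) :
    IsInvCompleteSub μ a (genAlg μ a A) :=
  IsInvCompleteSub.sInf ⟨mX, isInvCompleteSub_self μ a, hA⟩ fun _ hm => hm.1

theorem measurableSet_genAlg (A : ℕ → Set X) (n : ℕ) : MeasurableSet[genAlg μ a A] (A n) :=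
  MeasurableSpace.measurableSet_sInf.2 fun _ hm => hm.2 n

theorem genAlg_le {A : ℕ → Set X} {m : MeasurableSpace X} (hm : IsInvCompleteSub μ a m)
    (hA : ∀ n, MeasurableSet[m] (A n)) : genAlg μ a A ≤ m :=
  sInf_le ⟨hm, hA⟩

variable (μ a) in
abbrev invJoin (𝒜 ℬ : MeasurableSpace X) : MeasurableSpace X :=
  sInf {m | IsInvCompleteSub μ a m ∧ 𝒜 ≤ m ∧ ℬ ≤ m}

variable {𝒜 ℬ : MeasurableSpace X}

theorem isInvCompleteSub_invJoin (h𝒜 : 𝒜 ≤ mX) (hℬ : ℬ ≤ mX) :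
    IsInvCompleteSub μ a (invJoin μ a 𝒜 ℬ) :=
  IsInvCompleteSub.sInf ⟨mX, isInvCompleteSub_self μ a, h𝒜, hℬ⟩ fun _ hm => hm.1

theorem le_invJoin_left : 𝒜 ≤ invJoin μ a 𝒜 ℬ := le_sInf fun _ hm => hm.2.1

theorem le_invJoin_right : ℬ ≤ invJoin μ a 𝒜 ℬ := le_sInf fun _ hm => hm.2.2

theorem invJoin_le {m : MeasurableSpace X} (hm : IsInvCompleteSub μ a m) (h𝒜 : 𝒜 ≤ m)
    (hℬ : ℬ ≤ m) : invJoin μ a 𝒜 ℬ ≤ m :=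
  sInf_le ⟨hm, h𝒜, hℬ⟩

theorem Generates.join {A B : ℕ → Set X} (hA : IsCountablePartition A)
    (hB : IsCountablePartition B) (hA𝒜 : Generates μ a A 𝒜) (hBℬ : Generates μ a B ℬ)
    (h𝒜 : 𝒜 ≤ mX) (hℬ : ℬ ≤ mX) :
    Generates μ a (partitionJoin A B) (invJoin μ a 𝒜 ℬ) := by
  have hjoin (n : ℕ) : MeasurableSet[invJoin μ a 𝒜 ℬ] (partitionJoin A B n) :=
    (le_invJoin_left _ (hA𝒜.1 _)).inter (le_invJoin_right _ (hBℬ.1 _))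
  have hC : IsInvCompleteSub μ a (genAlg μ a (partitionJoin A B)) :=
    isInvCompleteSub_genAlg fun n => (h𝒜 _ (hA𝒜.1 _)).inter (hℬ _ (hBℬ.1 _))
  refine ⟨hjoin, le_antisymm (genAlg_le (isInvCompleteSub_invJoin h𝒜 hℬ) hjoin) ?_⟩
  refine invJoin_le hC (hA𝒜.2 ▸ genAlg_le hC fun i => ?_) (hBℬ.2 ▸ genAlg_le hC fun j => ?_)
  · rw [← hB.iUnion_partitionJoin_pair_left (A := A) i]
    exact .iUnion fun j => measurableSet_genAlg _ _
  · rw [← hA.iUnion_partitionJoin_pair_right (B := B) j]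
    exact .iUnion fun i => measurableSet_genAlg _ _

theorem rokhlinEntropy_invJoin_le [IsProbabilityMeasure μ] (h𝒜 : 𝒜 ≤ mX) (hℬ : ℬ ≤ mX) :
    rokhlinEntropy μ a (invJoin μ a 𝒜 ℬ) ≤ rokhlinEntropy μ a 𝒜 + rokhlinEntropy μ a ℬ := by
  refine ENNReal.le_iInf_add_iInf fun A B => ENNReal.le_iInf_add_iInf fun hA hB => ?_
  calc rokhlinEntropy μ a (invJoin μ a 𝒜 ℬ) ≤ partitionEntropy μ (partitionJoin A B) :=
        iInf₂_le _ ⟨hA.1.join hB.1, hA.2.join hA.1 hB.1 hB.2 h𝒜 hℬ⟩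
    _ = partitionEntropy μ fun x : ℕ × ℕ => A x.1 ∩ B x.2 := partitionEntropy_partitionJoin μ A B
    _ ≤ partitionEntropy μ A + partitionEntropy μ B :=
        partitionEntropy_inter_le μ hA.1 hB.1 (fun i => h𝒜 _ (hA.2.1 i))
          fun j => hℬ _ (hB.2.1 j)

end InvariantSubalgebras

end

theorem rokhlinEntropy_join_of_zero_general
    {X : Type*} {mX : MeasurableSpace X}
    {G : Type*} [Group G]
    (μ : Measure X) [IsProbabilityMeasure μ]
    (a : MeasAction G X mX μ)
    (𝒜 ℬ : MeasurableSpace X)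
    (h𝒜 : IsInvCompleteSub μ a 𝒜) (hℬ : IsInvCompleteSub μ a ℬ)
    (h𝒜0 : rokhlinEntropy μ a 𝒜 = 0) (hℬ0 : rokhlinEntropy μ a ℬ = 0) :
    rokhlinEntropy μ a (sInf {m | IsInvCompleteSub μ a m ∧ 𝒜 ≤ m ∧ ℬ ≤ m}) = 0 := by
  have h := rokhlinEntropy_invJoin_le (a := a) h𝒜.1 hℬ.1
  rwa [h𝒜0, hℬ0, add_zero, nonpos_iff_eq_zero] at h

/-- The join of two invariant complete sub-σ-algebras of zero Rokhlin entropy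
has zero Rokhlin entropy. -/
theorem rokhlinEntropy_join_of_zero
    {X : Type*} {mX : MeasurableSpace X} [StandardBorelSpace X]
    {G : Type*} [Group G] [Countable G]
    (μ : Measure X) [IsProbabilityMeasure μ]
    (a : MeasAction G X mX μ)
    (𝒜 ℬ : MeasurableSpace X)
    (h𝒜 : IsInvCompleteSub μ a 𝒜) (hℬ : IsInvCompleteSub μ a ℬ)
    (h𝒜0 : rokhlinEntropy μ a 𝒜 = 0) (hℬ0 : rokhlinEntropy μ a ℬ = 0) :
    rokhlinEntropy μ a (sInf {m | IsInvCompleteSub μ a m ∧ 𝒜 ≤ m ∧ ℬ ≤ m}) = 0 :=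
  rokhlinEntropy_join_of_zero_general μ a 𝒜 ℬ h𝒜 hℬ h𝒜0 hℬ0
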